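/- The presented monoid M_κ = ⟨x, y : x·y·x·y·x = y·y⟩⁺ is a Garside monoid, and M_κ admits no additive norm: there is no map ν : M_κ → ℕ with ν(a) > 0 for every a ≠ 1 and ν(ab) = ν(a) + ν(b) for all a, b ∈ M_κ. -/

import Mathlib

/-- `a` left-divides `b`. -/
def LeftDvd {M : Type*} [Monoid M] (a b : M) : Prop := ∃ c, b = a * c

/-- `a` right-divides `b`. -/
def RightDvd' {M : Type*} [Monoid M] (a b : M) : Prop := ∃ c, b = c * a

/-- `c` is a right lcm of `a` and `b` (least common upper bound for left-divisibility). -/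
def IsRightLcm {M : Type*} [Monoid M] (a b c : M) : Prop :=
  LeftDvd a c ∧ LeftDvd b c ∧ ∀ d, LeftDvd a d → LeftDvd b d → LeftDvd c d

/-- `c` is a left lcm of `a` and `b` (least common upper bound for right-divisibility). -/
def IsLeftLcm {M : Type*} [Monoid M] (a b c : M) : Prop :=
  RightDvd' a c ∧ RightDvd' b c ∧ ∀ d, RightDvd' a d → RightDvd' b d → RightDvd' c d

/-- `Δ` is a Garside element: its left-divisors coincide with its right-divisors,
they form a finite set, and this set generates `M`. -/
def IsGarsideElement {M : Type*} [Monoid M] (Δ : M) : Prop :=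
  {d | LeftDvd d Δ} = {d | RightDvd' d Δ} ∧
  {d | LeftDvd d Δ}.Finite ∧
  Submonoid.closure {d | LeftDvd d Δ} = ⊤

/-- A Garside monoid: cancellative, conical, atomic, with right and left lcms,
admitting a Garside element. -/
structure IsGarsideMonoid (M : Type*) [Monoid M] : Prop where
  mul_left_cancel : ∀ a b c : M, a * b = a * c → b = c
  mul_right_cancel : ∀ a b c : M, b * a = c * a → b = c
  conical : ∀ a : M, IsUnit a → a = 1
  atomic : ∃ ν : M → ℕ, (∀ a : M, a ≠ 1 → 0 < ν a) ∧ ∀ a b : M, ν a + ν b ≤ ν (a * b)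
  right_lcm : ∀ a b : M, ∃ c, IsRightLcm a b c
  left_lcm : ∀ a b : M, ∃ c, IsLeftLcm a b c
  garside : ∃ Δ : M, IsGarsideElement Δ

/-- A Garside structure on a group `G`: a Garside monoid together with an embedding
into `G` realizing `G` as its group of (left) fractions. -/
structure GarsideStructure (G : Type u) [Group G] where
  M : Type u
  [instM : Monoid M]
  garside : IsGarsideMonoid M
  ι : M →* G
  inj : Function.Injective ι
  frac : ∀ g : G, ∃ a b : M, g = (ι a)⁻¹ * ι b

/-- A group is Garside if it is the group of fractions of some Garside monoid. -/
def IsGarsideGroup (G : Type u) [Group G] : Prop := Nonempty (GarsideStructure G)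

/-- The relation `x·y·x·y·x = y·y`, with `false ↦ x`, `true ↦ y`. -/
def relKappa : FreeMonoid Bool → FreeMonoid Bool → Prop := fun u v =>
  u = FreeMonoid.of false * FreeMonoid.of true * FreeMonoid.of false *
        FreeMonoid.of true * FreeMonoid.of false ∧
  v = FreeMonoid.of true * FreeMonoid.of true

/-!
Orient the relation as `xyxyx → yy` and add its consequence `yyyx → xyyy`: the resulting string
rewriting system terminates and its critical pairs resolve, so by Newman's lemma every element of
`M` has a unique normal form. Prepending a letter to a normal form can be computed explicitly and
is injective, which gives left cancellativity; the relation consists of palindromes, so word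
reversal is an anti-automorphism and right cancellativity and left lcms follow by symmetry.

The element `Δ = yyy` is central and both letters divide it, so powers of `Δ` are common multiples.
The lcm of `x` and `y` is `yy`, and lcms of arbitrary elements are assembled from lcms of letters
by induction on an atomic norm: the weight `∑ g nᵢ + k` of the normal form `yⁿ⁰ x yⁿ¹ ⋯ x yⁿᵏ`,
where `g n = 5 n - 3 [3 ∤ n]` is superadditive and makes the weight nondecreasing along rewriting.

An additive norm `ν` is impossible: `xyxyx = yy` would force `3 ν x + 2 ν y = 2 ν y`.
-/

namespace Relation

variable {α : Type*} {r : α → α → Prop}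

/-- Newman's lemma. -/
theorem join_reflTransGen_of_locallyConfluent (hwf : WellFounded (flip r))
    (hlc : ∀ a b c, r a b → r a c → Join (ReflTransGen r) b c) {a b c : α}
    (hab : ReflTransGen r a b) (hac : ReflTransGen r a c) : Join (ReflTransGen r) b c := by
  induction a using hwf.induction generalizing b c with
  | _ a ih =>
  rcases hab.cases_head with rfl | ⟨b₁, hab₁, hb₁b⟩
  · exact ⟨c, hac, .refl⟩
  rcases hac.cases_head with rfl | ⟨c₁, hac₁, hc₁c⟩
  · exact ⟨b, .refl, .head hab₁ hb₁b⟩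
  obtain ⟨d, hb₁d, hc₁d⟩ := hlc a b₁ c₁ hab₁ hac₁
  obtain ⟨e, hbe, hde⟩ := ih b₁ hab₁ hb₁b hb₁d
  obtain ⟨f, hef, hcf⟩ := ih c₁ hac₁ (hc₁d.trans hde) hc₁c
  exact ⟨f, hbe.trans hef, hcf⟩

theorem exists_reflTransGen_irreducible (hwf : WellFounded (flip r)) (a : α) :
    ∃ b, ReflTransGen r a b ∧ ∀ c, ¬ r b c := by
  induction a using hwf.induction with
  | _ a ih =>
  by_cases h : ∃ b, r a b
  · obtain ⟨b, hab⟩ := h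
    obtain ⟨c, hbc, hc⟩ := ih b hab
    exact ⟨c, .head hab hbc, hc⟩
  · exact ⟨a, .refl, fun c hac => h ⟨c, hac⟩⟩

theorem ReflTransGen.eq_of_irreducible {a b : α} (h : ReflTransGen r a b) (ha : ∀ c, ¬ r a c) :
    a = b := by
  rcases h.cases_head with rfl | ⟨c, hac, -⟩
  · rfl
  · exact absurd hac (ha c)

end Relation

theorem List.exists_eq_append_of_append_eq_append {α : Type*} {a b c d : List α}
    (h : a ++ b = c ++ d) (hl : a.length ≤ c.length) : ∃ e, c = a ++ e ∧ b = e ++ d := by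
  rcases List.append_eq_append_iff.1 h with ⟨e, hc, hb⟩ | ⟨e, ha, hd⟩
  · exact ⟨e, hc, hb⟩
  · obtain rfl : e = [] := by simpa [ha] using hl
    exact ⟨[], by simpa using ha.symm, by simpa using hd.symm⟩

inductive StringRewrite {α : Type*} (R : List α → List α → Prop) : List α → List α → Prop
  | rewrite (A C : List α) {l r : List α} : R l r → StringRewrite R (A ++ l ++ C) (A ++ r ++ C)

namespace StringRewrite

open Relation

variable {α : Type*} {R : List α → List α → Prop}

theorem of_eq {s t A C l r : List α} (hlr : R l r) (hs : s = A ++ l ++ C) (ht : t = A ++ r ++ C) :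
    StringRewrite R s t :=
  hs ▸ ht ▸ rewrite A C hlr

theorem append_append {s t : List α} (h : StringRewrite R s t) (P Q : List α) :
    StringRewrite R (P ++ s ++ Q) (P ++ t ++ Q) := by
  obtain ⟨A, C, hlr⟩ := h
  exact of_eq (A := P ++ A) (C := C ++ Q) hlr (by simp) (by simp)

theorem reflTransGen_append_append {s t : List α} (h : ReflTransGen (StringRewrite R) s t)
    (P Q : List α) : ReflTransGen (StringRewrite R) (P ++ s ++ Q) (P ++ t ++ Q) := by
  induction h with
  | refl => exact .refl
  | tail _ hst ih => exact ih.tail (hst.append_append P Q)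

theorem join_append_append {s t : List α} (h : Join (ReflTransGen (StringRewrite R)) s t)
    (P Q : List α) : Join (ReflTransGen (StringRewrite R)) (P ++ s ++ Q) (P ++ t ++ Q) :=
  let ⟨u, hsu, htu⟩ := h
  ⟨P ++ u ++ Q, reflTransGen_append_append hsu P Q, reflTransGen_append_append htu P Q⟩

theorem exists_eq_append {s t : List α} (h : StringRewrite R s t) :
    ∃ A C l r, R l r ∧ s = A ++ l ++ C ∧ t = A ++ r ++ C :=
  let ⟨A, C, hlr⟩ := h
  ⟨A, C, _, _, hlr, rfl, rfl⟩

/-- Every overlap and every inclusion of two left-hand sides of `R` resolves. -/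
def CriticalPairsJoinable (R : List α → List α → Prop) : Prop :=
  (∀ l₁ r₁ l₂ r₂ D E, R l₁ r₁ → R l₂ r₂ → D ++ l₂ = l₁ ++ E → D.length < l₁.length →
    Join (ReflTransGen (StringRewrite R)) (r₁ ++ E) (D ++ r₂)) ∧
  (∀ l₁ r₁ l₂ r₂ D E, R l₁ r₁ → R l₂ r₂ → l₁ = D ++ l₂ ++ E →
    Join (ReflTransGen (StringRewrite R)) r₁ (D ++ r₂ ++ E))

theorem join_of_append_eq_append (hR : CriticalPairsJoinable R) {A₁ C₁ l₁ r₁ A₂ C₂ l₂ r₂ : List α}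
    (hlr₁ : R l₁ r₁) (hlr₂ : R l₂ r₂) (h : A₁ ++ l₁ ++ C₁ = A₂ ++ l₂ ++ C₂)
    (hA : A₁.length ≤ A₂.length) :
    Join (ReflTransGen (StringRewrite R)) (A₁ ++ r₁ ++ C₁) (A₂ ++ r₂ ++ C₂) := by
  obtain ⟨D, rfl, hC⟩ := List.exists_eq_append_of_append_eq_append
    (by simpa only [List.append_assoc] using h) hA
  by_cases hD : l₁.length ≤ D.length
  · obtain ⟨G, rfl, rfl⟩ := List.exists_eq_append_of_append_eq_append hC hD
    refine ⟨A₁ ++ r₁ ++ G ++ r₂ ++ C₂, .single (of_eq hlr₂ (A := A₁ ++ r₁ ++ G) (C := C₂) ?_ ?_),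
      .single (of_eq hlr₁ (A := A₁) (C := G ++ r₂ ++ C₂) ?_ ?_)⟩ <;> simp
  have hC' : l₁ ++ C₁ = D ++ l₂ ++ C₂ := by simpa only [List.append_assoc] using hC
  by_cases hl : l₁.length ≤ D.length + l₂.length
  · obtain ⟨E, hE, rfl⟩ := List.exists_eq_append_of_append_eq_append hC' (by simpa using hl)
    simpa using join_append_append (hR.1 l₁ r₁ l₂ r₂ D E hlr₁ hlr₂ hE (by omega)) A₁ C₂
  · obtain ⟨E, hE, rfl⟩ := List.exists_eq_append_of_append_eq_append hC'.symm (by simp; omega)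
    simpa using join_append_append (hR.2 l₁ r₁ l₂ r₂ D E hlr₁ hlr₂ hE) A₁ C₁

/-- The critical pair lemma. -/
theorem locallyConfluent (hR : CriticalPairsJoinable R) {s t₁ t₂ : List α}
    (h₁ : StringRewrite R s t₁) (h₂ : StringRewrite R s t₂) :
    Join (ReflTransGen (StringRewrite R)) t₁ t₂ := by
  obtain ⟨A₁, C₁, l₁, r₁, hlr₁, rfl, rfl⟩ := exists_eq_append h₁
  obtain ⟨A₂, C₂, l₂, r₂, hlr₂, h, rfl⟩ := exists_eq_append h₂
  rcases le_total A₁.length A₂.length with hA | hA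
  · exact join_of_append_eq_append hR hlr₁ hlr₂ h hA
  · obtain ⟨u, h₂u, h₁u⟩ := join_of_append_eq_append hR hlr₂ hlr₁ h.symm hA
    exact ⟨u, h₁u, h₂u⟩

end StringRewrite

section Divisibility

variable {M : Type*} [Monoid M]

theorem LeftDvd.refl (a : M) : LeftDvd a a := ⟨1, (mul_one a).symm⟩

theorem one_leftDvd (a : M) : LeftDvd 1 a := ⟨a, (one_mul a).symm⟩

theorem leftDvd_mul_right (a b : M) : LeftDvd a (a * b) := ⟨b, rfl⟩

theorem LeftDvd.trans {a b c : M} (hab : LeftDvd a b) (hbc : LeftDvd b c) : LeftDvd a c :=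
  let ⟨u, hu⟩ := hab
  let ⟨v, hv⟩ := hbc
  ⟨u * v, by rw [hv, hu, mul_assoc]⟩

theorem LeftDvd.mul_left {a b : M} (h : LeftDvd a b) (c : M) : LeftDvd (c * a) (c * b) :=
  let ⟨u, hu⟩ := h
  ⟨u, by rw [hu, mul_assoc]⟩

theorem IsRightLcm.one_left (a : M) : IsRightLcm 1 a a :=
  ⟨one_leftDvd a, .refl a, fun _ _ h => h⟩

theorem IsRightLcm.symm {a b c : M} (h : IsRightLcm a b c) : IsRightLcm b a c :=
  ⟨h.2.1, h.1, fun d hb ha => h.2.2 d ha hb⟩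

theorem IsRightLcm.self (a : M) : IsRightLcm a a a :=
  ⟨.refl a, .refl a, fun _ h _ => h⟩

def IsAtomicNorm (ν : M → ℕ) : Prop :=
  (∀ a, a ≠ 1 → 0 < ν a) ∧ ∀ a b, ν a + ν b ≤ ν (a * b)

theorem IsAtomicNorm.lt_of_eq_mul {ν : M → ℕ} (hν : IsAtomicNorm ν) {s d e : M} (hs : s ≠ 1)
    (h : d = s * e) : ν e < ν d := by
  have := hν.2 s e
  have := hν.1 s hs
  rw [h]
  omega

theorem IsAtomicNorm.eq_one_of_mul_eq_one {ν : M → ℕ} (hν : IsAtomicNorm ν) {a b : M}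
    (h : a * b = 1) : a = 1 := by
  by_contra ha
  have h₁ := hν.lt_of_eq_mul ha h.symm
  have h₂ := hν.2 1 1
  rw [one_mul] at h₂
  omega

theorem IsAtomicNorm.eq_one_of_isUnit {ν : M → ℕ} (hν : IsAtomicNorm ν) {a : M}
    (ha : IsUnit a) : a = 1 :=
  let ⟨u, hu⟩ := ha
  hν.eq_one_of_mul_eq_one (b := ↑u⁻¹) (hu ▸ u.mul_inv)

theorem exists_mem_leftDvd_of_closure_eq_top {S : Set M} (hS : Submonoid.closure S = ⊤) {a : M}
    (ha : a ≠ 1) : ∃ s ∈ S, s ≠ 1 ∧ LeftDvd s a := by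
  suffices h : a = 1 ∨ ∃ s ∈ S, s ≠ 1 ∧ LeftDvd s a from h.resolve_left ha
  clear ha
  induction (hS ▸ Submonoid.mem_top a : a ∈ Submonoid.closure S) using
    Submonoid.closure_induction with
  | mem s hs => exact (eq_or_ne s 1).imp_right fun hs1 => ⟨s, hs, hs1, .refl s⟩
  | one => exact .inl rfl
  | mul a b _ _ iha ihb =>
    rcases iha with rfl | ⟨s, hs, hs1, hsa⟩
    · simpa using ihb
    · exact .inr ⟨s, hs, hs1, hsa.trans (leftDvd_mul_right a b)⟩

theorem RightDvd'.of_mulEquiv_mulOpposite (e : M ≃* Mᵐᵒᵖ) {a b : M} :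
    RightDvd' a b ↔ LeftDvd (e a).unop (e b).unop := by
  constructor
  · rintro ⟨c, rfl⟩
    exact ⟨(e c).unop, by rw [map_mul, MulOpposite.unop_mul]⟩
  · rintro ⟨c, hc⟩
    refine ⟨e.symm (MulOpposite.op c), e.injective ?_⟩
    rw [map_mul, MulEquiv.apply_symm_apply, ← MulOpposite.op_unop (e b), hc,
      MulOpposite.op_mul, MulOpposite.op_unop]

theorem exists_isLeftLcm_of_mulEquiv_mulOpposite (e : M ≃* Mᵐᵒᵖ)
    (h : ∀ a b : M, ∃ c, IsRightLcm a b c) (a b : M) : ∃ c, IsLeftLcm a b c := by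
  obtain ⟨c, hac, hbc, hmin⟩ := h (e a).unop (e b).unop
  refine ⟨e.symm (MulOpposite.op c), ?_⟩
  simp only [IsLeftLcm, RightDvd'.of_mulEquiv_mulOpposite e, MulEquiv.apply_symm_apply,
    MulOpposite.unop_op]
  exact ⟨hac, hbc, fun d => hmin _⟩

variable [IsLeftCancelMul M]

theorem LeftDvd.of_mul_left {a b c : M} (h : LeftDvd (c * a) (c * b)) : LeftDvd a b :=
  let ⟨u, hu⟩ := h
  ⟨u, mul_left_cancel (by rw [hu, mul_assoc])⟩

theorem IsRightLcm.mul_left {a b c : M} (h : IsRightLcm a b c) (s : M) :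
    IsRightLcm (s * a) (s * b) (s * c) := by
  refine ⟨h.1.mul_left s, h.2.1.mul_left s, fun d had hbd => ?_⟩
  obtain ⟨u, rfl⟩ := had
  rw [mul_assoc] at hbd ⊢
  exact (h.2.2 _ (leftDvd_mul_right a u) hbd.of_mul_left).mul_left s

theorem IsRightLcm.mul_of_isRightLcm {a b m e₁ e₂ c : M}
    (hm : ∀ f, LeftDvd a f → LeftDvd b f → LeftDvd m f) (h₁ : IsRightLcm a m (m * e₁))
    (h₂ : IsRightLcm b m (m * e₂)) (h : IsRightLcm e₁ e₂ c) : IsRightLcm a b (m * c) := by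
  refine ⟨h₁.1.trans (h.1.mul_left m), h₂.1.trans (h.2.1.mul_left m), fun f haf hbf => ?_⟩
  obtain ⟨f', rfl⟩ := hm f haf hbf
  exact (h.2.2 f' (h₁.2.2 _ haf (leftDvd_mul_right m f')).of_mul_left
    (h₂.2.2 _ hbf (leftDvd_mul_right m f')).of_mul_left).mul_left m

theorem exists_isRightLcm_of_generators {ν : M → ℕ} (hν : IsAtomicNorm ν) {S : Set M}
    (hS : Submonoid.closure S = ⊤) (hlcm : ∀ s ∈ S, ∀ t ∈ S, ∃ m, IsRightLcm s t m) {a b d : M}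
    (ha : LeftDvd a d) (hb : LeftDvd b d) : ∃ c, IsRightLcm a b c ∧ LeftDvd c d := by
  induction d using (measure ν).wf.induction generalizing a b with
  | _ d ih =>
  -- With `a = s a'`, `b = t b'`, `m = lcm(s, t) = s α = t β` and `d = m w`, the lcms
  -- `s · lcm(a', α) = m e₁` of `a, m` and `t · lcm(b', β) = m e₂` of `b, m` come from smaller
  -- common multiples, `e₁` and `e₂` divide `w`, and `m · lcm(e₁, e₂)` is the lcm of `a` and `b`.
  rcases eq_or_ne a 1 with rfl | ha1
  · exact ⟨b, .one_left b, hb⟩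
  rcases eq_or_ne b 1 with rfl | hb1
  · exact ⟨a, (IsRightLcm.one_left a).symm, ha⟩
  obtain ⟨s, hsS, hs1, a', rfl⟩ := exists_mem_leftDvd_of_closure_eq_top hS ha1
  obtain ⟨t, htS, ht1, b', rfl⟩ := exists_mem_leftDvd_of_closure_eq_top hS hb1
  obtain ⟨m, hm⟩ := hlcm s hsS t htS
  obtain ⟨α, hα⟩ := hm.1
  obtain ⟨β, hβ⟩ := hm.2.1
  obtain ⟨w, hw⟩ := hm.2.2 d ((leftDvd_mul_right s a').trans ha)
    ((leftDvd_mul_right t b').trans hb)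
  have hm1 : m ≠ 1 := fun h => hs1 (hν.eq_one_of_mul_eq_one (hα ▸ h))
  obtain ⟨u, hu⟩ := ha
  obtain ⟨v, hv⟩ := hb
  have hua : a' * u = α * w := mul_left_cancel (by rw [← mul_assoc, ← hu, hw, hα, mul_assoc])
  have hvb : b' * v = β * w := mul_left_cancel (by rw [← mul_assoc, ← hv, hw, hβ, mul_assoc])
  obtain ⟨m₁, hm₁, hm₁d⟩ := ih _ (hν.lt_of_eq_mul hs1 (by rw [hu, mul_assoc]))
    (leftDvd_mul_right a' u) ⟨w, hua⟩
  obtain ⟨m₂, hm₂, hm₂d⟩ := ih _ (hν.lt_of_eq_mul ht1 (by rw [hv, mul_assoc]))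
    (leftDvd_mul_right b' v) ⟨w, hvb⟩
  have hA := hm₁.mul_left s
  have hB := hm₂.mul_left t
  rw [← hα] at hA
  rw [← hβ] at hB
  obtain ⟨e₁, he₁⟩ := hA.2.1
  obtain ⟨e₂, he₂⟩ := hB.2.1
  have hw₁ : LeftDvd e₁ w := by
    refine LeftDvd.of_mul_left (c := m) ?_
    rw [← he₁, ← hw, hu, mul_assoc]
    exact hm₁d.mul_left s
  have hw₂ : LeftDvd e₂ w := by
    refine LeftDvd.of_mul_left (c := m) ?_
    rw [← he₂, ← hw, hv, mul_assoc]
    exact hm₂d.mul_left t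
  obtain ⟨c, hc, hcw⟩ := ih w (hν.lt_of_eq_mul hm1 hw) hw₁ hw₂
  refine ⟨m * c, IsRightLcm.mul_of_isRightLcm (fun f haf hbf => hm.2.2 f ?_ ?_)
    (he₁ ▸ hA) (he₂ ▸ hB) hc, hw ▸ hcw.mul_left m⟩
  · exact (leftDvd_mul_right s a').trans haf
  · exact (leftDvd_mul_right t b').trans hbf

theorem setOf_leftDvd_eq_setOf_rightDvd' {Δ : M} (hΔ : ∀ a, Δ * a = a * Δ) :
    {d | LeftDvd d Δ} = {d | RightDvd' d Δ} := by
  ext d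
  constructor
  · rintro ⟨c, hc⟩
    exact ⟨c, mul_left_cancel (a := d) (by rw [← mul_assoc, ← hc, hΔ])⟩
  · rintro ⟨c, hc⟩
    exact ⟨c, mul_left_cancel (a := c) (by rw [← mul_assoc, ← hc, hΔ])⟩

end Divisibility

namespace Kappa

open Relation

abbrev Word := List Bool

/-- `yyy·x = xyxyx·yx = xy·xyxyx = x·yyy` holds in the monoid; adding it as a second rule makes
the system confluent. -/
inductive Rule : Word → Word → Prop
  | braid : Rule [false, true, false, true, false] [true, true]
  | shift : Rule [true, true, true, false] [false, true, true, true]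

abbrev Step := StringRewrite Rule

theorem criticalPairsJoinable : StringRewrite.CriticalPairsJoinable Rule := by
  -- the three nontrivial critical pairs, named after their overlap words
  have xyxyxyx : Join (ReflTransGen Step) [true, true, true, false] [false, true, true, true] :=
    ⟨_, .single (.rewrite [] [] Rule.shift), .refl⟩
  have xyxyxyxyx : Join (ReflTransGen Step) [true, true, true, false, true, false]
      [false, true, false, true, true, true] :=
    ⟨_, .head (.rewrite [] [true, false] Rule.shift)
      (.single (.rewrite [false, true] [] Rule.shift)), .refl⟩
  have yyyxyxyx : Join (ReflTransGen Step) [false, true, true, true, true, false, true, false]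
      [true, true, true, true, true] :=
    ⟨_, .head (.rewrite [false, true] [true, false] Rule.shift)
      (.head (.rewrite [false, true, false, true] [] Rule.shift)
        (.single (.rewrite [] [true, true, true] Rule.braid))), .refl⟩
  constructor
  · intro l₁ r₁ l₂ r₂ D E h₁ h₂ hE hD
    -- `D` is a proper prefix of `l₁`, which `hE` either rules out or turns into a critical pair
    cases h₁ <;> cases h₂ <;> rcases D with _ | ⟨a, _ | ⟨b, _ | ⟨c, _ | ⟨d, _ | ⟨e, D⟩⟩⟩⟩⟩ <;>
      simp only [List.length_cons, List.length_nil] at hD <;> (try omega) <;> simp at hE <;>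
      (try casesm* _ ∧ _) <;> subst_vars
    all_goals first
      | exact ⟨_, .refl, .refl⟩ | exact xyxyxyx | exact xyxyxyxyx | exact yyyxyxyx
  · intro l₁ r₁ l₂ r₂ D E h₁ h₂ hE
    have hlen := congrArg List.length hE
    cases h₁ <;> cases h₂ <;> rcases D with _ | ⟨a, D⟩ <;> rcases E with _ | ⟨b, E⟩ <;>
      simp at hlen hE ⊢ <;> (try omega)
    all_goals first | exact ⟨_, .refl, .refl⟩ | simp [hlen] at hE

def sumXPositions : Word → ℕ
  | [] => 0
  | _ :: t => t.count false + sumXPositions t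

theorem sumXPositions_append (u v : Word) :
    sumXPositions (u ++ v) = sumXPositions u + v.count false * u.length + sumXPositions v := by
  induction u with
  | nil => simp [sumXPositions]
  | cons a u ih => simp only [List.cons_append, sumXPositions, List.count_append, ih,
      List.length_cons]; ring

theorem sumXPositions_lt_of_rule {l r : Word} (h : Rule l r) (A C : Word) :
    sumXPositions (A ++ r ++ C) < sumXPositions (A ++ l ++ C) := by
  have key : r.count false ≤ l.count false ∧ r.length ≤ l.length ∧
      sumXPositions r < sumXPositions l := by
    cases h <;> decide
  obtain ⟨hc, hl, hs⟩ := key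
  simp only [sumXPositions_append, List.length_append]
  nlinarith [Nat.zero_le (C.count false), Nat.zero_le A.length]

theorem wellFounded_flip_step : WellFounded (flip Step) :=
  Subrelation.wf (fun {_ _} h => by obtain ⟨A, C, hlr⟩ := h; exact sumXPositions_lt_of_rule hlr A C)
    (measure sumXPositions).wf

theorem join_of_reflTransGen {s t₁ t₂ : Word} (h₁ : ReflTransGen Step s t₁)
    (h₂ : ReflTransGen Step s t₂) : Join (ReflTransGen Step) t₁ t₂ :=
  join_reflTransGen_of_locallyConfluent wellFounded_flip_step
    (fun _ _ _ => StringRewrite.locallyConfluent criticalPairsJoinable) h₁ h₂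

def IsNormal (w : Word) : Prop :=
  ¬ [false, true, false, true, false] <:+: w ∧ ¬ [true, true, true, false] <:+: w

theorem isNormal_iff {w : Word} : IsNormal w ↔ ∀ t, ¬ Step w t := by
  constructor
  · rintro ⟨h₁, h₂⟩ t ⟨A, C, hlr⟩
    cases hlr
    · exact h₁ ⟨A, C, rfl⟩
    · exact h₂ ⟨A, C, rfl⟩
  · intro h
    constructor
    · rintro ⟨A, C, rfl⟩
      exact h _ (.rewrite A C Rule.braid)
    · rintro ⟨A, C, rfl⟩
      exact h _ (.rewrite A C Rule.shift)

noncomputable def nf (w : Word) : Word :=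
  (exists_reflTransGen_irreducible wellFounded_flip_step w).choose

theorem reflTransGen_nf (w : Word) : ReflTransGen Step w (nf w) :=
  (exists_reflTransGen_irreducible wellFounded_flip_step w).choose_spec.1

theorem isNormal_nf (w : Word) : IsNormal (nf w) :=
  isNormal_iff.2 (exists_reflTransGen_irreducible wellFounded_flip_step w).choose_spec.2

theorem nf_eq_self {w : Word} (h : IsNormal w) : nf w = w :=
  ((reflTransGen_nf w).eq_of_irreducible (isNormal_iff.1 h)).symm

theorem nf_eq_of_reflTransGen {s t : Word} (h : ReflTransGen Step s t) : nf s = nf t := by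
  obtain ⟨u, hsu, htu⟩ := join_of_reflTransGen (reflTransGen_nf s) (h.trans (reflTransGen_nf t))
  rw [hsu.eq_of_irreducible (isNormal_iff.1 (isNormal_nf s)),
    htu.eq_of_irreducible (isNormal_iff.1 (isNormal_nf t))]

theorem nf_append (u v : Word) : nf (u ++ v) = nf (nf u ++ nf v) := by
  apply nf_eq_of_reflTransGen
  have hu := StringRewrite.reflTransGen_append_append (reflTransGen_nf u) [] v
  have hv := StringRewrite.reflTransGen_append_append (reflTransGen_nf v) (nf u) []
  simp only [List.nil_append, List.append_nil] at hu hv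
  exact hu.trans hv

theorem nf_nil : nf [] = [] := nf_eq_self ⟨by decide, by decide⟩

abbrev M := PresentedMonoid relKappa

def ofWord (w : Word) : M := PresentedMonoid.mk relKappa (FreeMonoid.ofList w)

@[simp] theorem ofWord_append (u v : Word) : ofWord (u ++ v) = ofWord u * ofWord v :=
  map_mul _ _ _

@[simp] theorem ofWord_nil : ofWord [] = 1 := rfl

theorem ofWord_cons (a : Bool) (w : Word) : ofWord (a :: w) = ofWord [a] * ofWord w :=
  ofWord_append [a] w

theorem ofWord_eq_of_rule {l r : Word} (h : Rule l r) : ofWord l = ofWord r := by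
  have braid : ofWord [false, true, false, true, false] = ofWord [true, true] :=
    PresentedMonoid.mk_eq_mk_of_rel ⟨rfl, rfl⟩
  cases h with
  | braid => exact braid
  | shift =>
    calc ofWord [true, true, true, false]
        = ofWord [true, true] * ofWord [true, false] := by rw [← ofWord_append]; rfl
      _ = ofWord [false, true] * ofWord [false, true, false, true, false] := by
          rw [← braid, ← ofWord_append, ← ofWord_append]; rfl
      _ = ofWord [false, true, true, true] := by rw [braid, ← ofWord_append]; rfl

theorem ofWord_eq_of_reflTransGen {s t : Word} (h : ReflTransGen Step s t) :
    ofWord s = ofWord t := by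
  induction h with
  | refl => rfl
  | tail _ hst ih =>
    obtain ⟨A, C, hlr⟩ := hst
    simp only [ofWord_append, ofWord_eq_of_rule hlr] at ih ⊢
    exact ih

def nfCon : Con (FreeMonoid Bool) where
  r u v := nf u.toList = nf v.toList
  iseqv := ⟨fun _ => rfl, Eq.symm, Eq.trans⟩
  mul' {a b c d} h₁ h₂ := by
    simp only [FreeMonoid.toList_mul]
    rw [nf_append, h₁, h₂, ← nf_append]

theorem conGen_le_nfCon : conGen relKappa ≤ nfCon := Con.conGen_le.2 <| by
  rintro _ _ ⟨rfl, rfl⟩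
  exact nf_eq_of_reflTransGen (.single (.rewrite [] [] Rule.braid))

theorem ofWord_eq_ofWord_iff {u v : Word} : ofWord u = ofWord v ↔ nf u = nf v :=
  ⟨fun h => conGen_le_nfCon (PresentedMonoid.mk_eq_mk_iff.1 h), fun h => by
    rw [ofWord_eq_of_reflTransGen (reflTransGen_nf u), h,
      ← ofWord_eq_of_reflTransGen (reflTransGen_nf v)]⟩

theorem isNormal_append_true {v : Word} (h : IsNormal v) : IsNormal (v ++ [true]) := by
  refine ⟨fun hi => ?_, fun hi => ?_⟩ <;> rcases List.infix_concat_iff.1 hi with hs | hi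
  any_goals
    obtain ⟨t, ht, -⟩ := (List.suffix_concat_iff.1 hs).resolve_left (by simp)
    simpa using congrArg List.getLast? ht
  exacts [h.1 hi, h.2 hi]

theorem IsNormal.of_cons {a : Bool} {u : Word} (h : IsNormal (a :: u)) : IsNormal u :=
  ⟨fun hi => h.1 (hi.trans (List.suffix_cons a u).isInfix),
    fun hi => h.2 (hi.trans (List.suffix_cons a u).isInfix)⟩

theorem IsNormal.cons {a : Bool} {u : Word} (h : IsNormal u)
    (h₁ : ¬ [false, true, false, true, false] <+: a :: u)
    (h₂ : ¬ [true, true, true, false] <+: a :: u) : IsNormal (a :: u) :=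
  ⟨fun hi => (List.infix_cons_iff.1 hi).elim h₁ h.1,
    fun hi => (List.infix_cons_iff.1 hi).elim h₂ h.2⟩

theorem IsNormal.append_yyy {v : Word} (h : IsNormal v) : IsNormal (v ++ [true, true, true]) := by
  simpa using isNormal_append_true (isNormal_append_true (isNormal_append_true h))

/-- `consY u` is the normal form of `y :: u` for normal `u`: `y·yyx·v = yyyx·v → x·yyy·v`, and
`yyy` is then pushed to the end. -/
def consY : Word → Word
  | true :: true :: false :: v => false :: (v ++ [true, true, true])
  | u => true :: u

/-- `consX u` is the normal form of `x :: u` for normal `u`, using `x·yxyx·v → yy·v`. -/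
def consX : Word → Word
  | true :: false :: true :: false :: v => consY (consY v)
  | u => false :: u

theorem consY_of_not {u : Word} (h : ¬ ∃ v, u = true :: true :: false :: v) :
    consY u = true :: u := by
  rcases u with _ | ⟨a, _ | ⟨b, _ | ⟨c, v⟩⟩⟩
  · rfl
  · cases a <;> rfl
  · cases a <;> cases b <;> rfl
  · cases a <;> cases b <;> cases c <;> first | rfl | exact absurd ⟨v, rfl⟩ h

theorem consX_of_not {u : Word} (h : ¬ ∃ v, u = true :: false :: true :: false :: v) :
    consX u = false :: u := by
  rcases u with _ | ⟨a, _ | ⟨b, _ | ⟨c, _ | ⟨d, v⟩⟩⟩⟩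
  · rfl
  · cases a <;> rfl
  · cases a <;> cases b <;> rfl
  · cases a <;> cases b <;> cases c <;> rfl
  · cases a <;> cases b <;> cases c <;> cases d <;> first | rfl | exact absurd ⟨v, rfl⟩ h

theorem IsNormal.consY {u : Word} (h : IsNormal u) : IsNormal (consY u) := by
  by_cases hu : ∃ v, u = true :: true :: false :: v
  · obtain ⟨v, rfl⟩ := hu
    exact h.of_cons.of_cons.append_yyy
  · rw [consY_of_not hu]
    refine h.cons (by simp [List.cons_prefix_cons]) fun ⟨e, he⟩ => hu ⟨e, ?_⟩
    simpa using he.symm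

theorem IsNormal.consX {u : Word} (h : IsNormal u) : IsNormal (consX u) := by
  by_cases hu : ∃ v, u = true :: false :: true :: false :: v
  · obtain ⟨v, rfl⟩ := hu
    exact h.of_cons.of_cons.of_cons.of_cons.consY.consY
  · rw [consX_of_not hu]
    refine h.cons (fun ⟨e, he⟩ => hu ⟨e, ?_⟩) (by simp [List.cons_prefix_cons])
    simpa using he.symm

theorem ofWord_yyy_append (v : Word) :
    ofWord ([true, true, true] ++ v) = ofWord (v ++ [true, true, true]) := by
  induction v with
  | nil => rfl
  | cons a v ih =>
    have hshift : ofWord ([true, true, true] ++ [a]) = ofWord ([a] ++ [true, true, true]) := by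
      cases a
      · exact ofWord_eq_of_rule Rule.shift
      · rfl
    calc ofWord ([true, true, true] ++ a :: v)
        = ofWord ([true, true, true] ++ [a]) * ofWord v := by rw [← ofWord_append]; rfl
      _ = ofWord [a] * ofWord ([true, true, true] ++ v) := by
          rw [hshift, ofWord_append, ofWord_append, mul_assoc]
      _ = ofWord (a :: v ++ [true, true, true]) := by rw [ih, ← ofWord_append]; rfl

theorem ofWord_consY (u : Word) : ofWord (true :: u) = ofWord (consY u) := by
  by_cases hu : ∃ v, u = true :: true :: false :: v
  · obtain ⟨v, rfl⟩ := hu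
    calc ofWord (true :: true :: true :: false :: v)
        = ofWord ([false, true, true, true] ++ v) :=
          ofWord_eq_of_reflTransGen (.single (.rewrite [] v Rule.shift))
      _ = ofWord [false] * ofWord ([true, true, true] ++ v) := by
          rw [← ofWord_append]; rfl
      _ = ofWord (consY (true :: true :: false :: v)) := by
          rw [ofWord_yyy_append, ← ofWord_append]; rfl
  · rw [consY_of_not hu]

theorem ofWord_consX (u : Word) : ofWord (false :: u) = ofWord (consX u) := by
  by_cases hu : ∃ v, u = true :: false :: true :: false :: v
  · obtain ⟨v, rfl⟩ := hu
    calc ofWord (false :: true :: false :: true :: false :: v)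
        = ofWord (true :: true :: v) :=
          ofWord_eq_of_reflTransGen (.single (.rewrite [] v Rule.braid))
      _ = ofWord (consX (true :: false :: true :: false :: v)) := by
          rw [ofWord_cons true (true :: v), ofWord_consY v, ← ofWord_cons, ofWord_consY]; rfl
  · rw [consX_of_not hu]

theorem nf_cons_true {u : Word} (h : IsNormal u) : nf (true :: u) = consY u := by
  rw [ofWord_eq_ofWord_iff.1 (ofWord_consY u), nf_eq_self h.consY]

theorem nf_cons_false {u : Word} (h : IsNormal u) : nf (false :: u) = consX u := by
  rw [ofWord_eq_ofWord_iff.1 (ofWord_consX u), nf_eq_self h.consX]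

theorem consY_injective : Function.Injective consY := by
  intro u u' h
  by_cases hu : ∃ v, u = true :: true :: false :: v <;>
    by_cases hu' : ∃ v, u' = true :: true :: false :: v
  · obtain ⟨v, rfl⟩ := hu
    obtain ⟨v', rfl⟩ := hu'
    simpa [consY] using h
  · obtain ⟨v, rfl⟩ := hu
    rw [consY_of_not hu'] at h
    simp [consY] at h
  · obtain ⟨v', rfl⟩ := hu'
    rw [consY_of_not hu] at h
    simp [consY] at h
  · simpa [consY_of_not hu, consY_of_not hu'] using h

theorem consY_consY_eq_cons {v : Word} (h : IsNormal (true :: false :: true :: false :: v)) :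
    ∃ w, consY (consY v) = true :: w := by
  by_cases hv : ∃ v₂, v = true :: true :: false :: v₂
  · obtain ⟨v₂, rfl⟩ := hv
    exact ⟨_, consY_of_not (by simp [consY])⟩
  · rw [consY_of_not hv]
    by_cases hv' : ∃ v₂, v = true :: false :: v₂
    · obtain ⟨v₂, rfl⟩ := hv'
      exact absurd ⟨[true], v₂, rfl⟩ h.1
    · exact ⟨_, consY_of_not fun ⟨w, hw⟩ => hv' ⟨w, by simpa using hw⟩⟩

theorem consX_injOn {u u' : Word} (hu : IsNormal u) (hu' : IsNormal u')
    (h : consX u = consX u') : u = u' := by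
  by_cases hm : ∃ v, u = true :: false :: true :: false :: v <;>
    by_cases hm' : ∃ v, u' = true :: false :: true :: false :: v
  · obtain ⟨v, rfl⟩ := hm
    obtain ⟨v', rfl⟩ := hm'
    rw [consY_injective (consY_injective h)]
  · obtain ⟨v, rfl⟩ := hm
    obtain ⟨w, hw⟩ := consY_consY_eq_cons hu
    rw [consX_of_not hm'] at h
    simp [consX, hw] at h
  · obtain ⟨v', rfl⟩ := hm'
    obtain ⟨w, hw⟩ := consY_consY_eq_cons hu'
    rw [consX_of_not hm] at h
    simp [consX, hw] at h
  · simpa [consX_of_not hm, consX_of_not hm'] using h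

theorem exists_yy_of_consX_eq_consY {u v : Word} (h : consX u = consY v) :
    ∃ w, ofWord (false :: u) = ofWord (true :: true :: w) := by
  by_cases hu : ∃ w, u = true :: false :: true :: false :: w
  · obtain ⟨w, rfl⟩ := hu
    exact ⟨w, ofWord_eq_of_reflTransGen (.single (.rewrite [] w Rule.braid))⟩
  rw [consX_of_not hu] at h
  by_cases hv : ∃ w, v = true :: true :: false :: w
  · obtain ⟨w, rfl⟩ := hv
    obtain rfl : u = w ++ [true, true, true] := by simpa [consY] using h
    refine ⟨true :: false :: w, ?_⟩
    calc ofWord (false :: (w ++ [true, true, true]))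
        = ofWord ((false :: w) ++ [true, true, true]) := rfl
      _ = ofWord (true :: true :: true :: false :: w) := (ofWord_yyy_append _).symm
  · rw [consY_of_not hv] at h
    simp at h

noncomputable def normalForm (m : M) : Word :=
  Con.liftOn m (fun w => nf w.toList) fun _ _ h => conGen_le_nfCon h

theorem normalForm_ofWord (w : Word) : normalForm (ofWord w) = nf w := rfl

theorem isNormal_normalForm (m : M) : IsNormal (normalForm m) :=
  PresentedMonoid.inductionOn m fun _ => isNormal_nf _

theorem ofWord_normalForm (m : M) : ofWord (normalForm m) = m :=
  PresentedMonoid.inductionOn m fun _ => ofWord_eq_ofWord_iff.2 (nf_eq_self (isNormal_nf _))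

theorem normalForm_injective : Function.Injective normalForm :=
  Function.LeftInverse.injective ofWord_normalForm

theorem normalForm_eq_nil_iff {m : M} : normalForm m = [] ↔ m = 1 :=
  ⟨fun h => by rw [← ofWord_normalForm m, h, ofWord_nil], fun h => h ▸ nf_nil⟩

theorem ofWord_ne_one {w : Word} (hw : IsNormal w) (hne : w ≠ []) : ofWord w ≠ 1 := by
  intro h
  rw [← normalForm_eq_nil_iff, normalForm_ofWord, nf_eq_self hw] at h
  exact hne h

theorem letter_mul_left_cancel {a : Bool} {b c : M} (h : ofWord [a] * b = ofWord [a] * c) :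
    b = c := by
  rw [← ofWord_normalForm b, ← ofWord_normalForm c, ← ofWord_cons, ← ofWord_cons,
    ofWord_eq_ofWord_iff] at h
  apply normalForm_injective
  cases a
  · rw [nf_cons_false (isNormal_normalForm b), nf_cons_false (isNormal_normalForm c)] at h
    exact consX_injOn (isNormal_normalForm b) (isNormal_normalForm c) h
  · rw [nf_cons_true (isNormal_normalForm b), nf_cons_true (isNormal_normalForm c)] at h
    exact consY_injective h

theorem ofWord_mul_left_cancel (w : Word) {b c : M} (h : ofWord w * b = ofWord w * c) :
    b = c := by
  induction w with
  | nil => simpa using h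
  | cons a w ih =>
    rw [ofWord_cons, mul_assoc, mul_assoc] at h
    exact ih (letter_mul_left_cancel h)

instance : IsLeftCancelMul M where
  mul_left_cancel a b c h := ofWord_mul_left_cancel (normalForm a) (by rwa [ofWord_normalForm])

theorem yy_leftDvd {d : M} (hx : LeftDvd (ofWord [false]) d) (hy : LeftDvd (ofWord [true]) d) :
    LeftDvd (ofWord [true, true]) d := by
  obtain ⟨a, rfl⟩ := hx
  obtain ⟨b, hb⟩ := hy
  rw [← ofWord_normalForm a, ← ofWord_normalForm b, ← ofWord_cons, ← ofWord_cons] at hb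
  rw [← ofWord_normalForm a, ← ofWord_cons]
  have h := ofWord_eq_ofWord_iff.1 hb
  rw [nf_cons_false (isNormal_normalForm a), nf_cons_true (isNormal_normalForm b)] at h
  obtain ⟨w, hw⟩ := exists_yy_of_consX_eq_consY h
  exact ⟨ofWord w, by rw [hw, ← ofWord_append]; rfl⟩

/-- `5 n`, minus `3` unless `3 ∣ n`. -/
def blockWeight (n : ℕ) : ℕ := 5 * n - 3 * min (n % 3) 1

/-- `weightAux n w` is the weight of `yⁿ w`, where `y^n₀ x y^n₁ x ⋯ x y^n_k` has weight
`∑ blockWeight nᵢ + k`. -/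
def weightAux : ℕ → Word → ℕ
  | n, [] => blockWeight n
  | n, false :: t => blockWeight n + 1 + weightAux 0 t
  | n, true :: t => weightAux (n + 1) t

def weight (w : Word) : ℕ := weightAux 0 w

theorem blockWeight_add_le (a b : ℕ) : blockWeight a + blockWeight b ≤ blockWeight (a + b) := by
  unfold blockWeight; omega

theorem weightAux_eq_blockWeight_add (C : Word) :
    ∃ k R, ∀ m, weightAux m C = blockWeight (m + k) + R := by
  induction C with
  | nil => exact ⟨0, 0, fun m => rfl⟩
  | cons a t ih =>
    cases a
    · exact ⟨0, 1 + weightAux 0 t, fun m => by simp only [weightAux, Nat.add_zero]; omega⟩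
    · obtain ⟨k, R, hk⟩ := ih
      exact ⟨k + 1, R, fun m => by simp only [weightAux, hk]; congr 2; omega⟩

theorem weightAux_append_le {P Q : Word} (h : ∀ n, weightAux n P ≤ weightAux n Q) (A : Word)
    (n : ℕ) : weightAux n (A ++ P) ≤ weightAux n (A ++ Q) := by
  induction A generalizing n with
  | nil => exact h n
  | cons a t ih =>
    cases a
    · simpa [weightAux] using ih 0
    · exact ih (n + 1)

/-- For `xyxyx → yy` this is `blockWeight a + blockWeight b + 7 ≤ blockWeight (a + b + 2)`, and
for `yyyx → xyyy` it is `blockWeight (a + 3) = blockWeight a + 15`. -/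
theorem weight_le_of_step {s t : Word} (h : Step s t) : weight s ≤ weight t := by
  obtain ⟨A, C, hlr⟩ := h
  simp only [weight, List.append_assoc]
  refine weightAux_append_le (fun n => ?_) A 0
  obtain ⟨k, R, hk⟩ := weightAux_eq_blockWeight_add C
  cases hlr <;> simp only [List.cons_append, List.nil_append, weightAux, hk] <;>
    unfold blockWeight <;> omega

theorem weight_le_of_reflTransGen {s t : Word} (h : Relation.ReflTransGen Step s t) :
    weight s ≤ weight t := by
  induction h with
  | refl => exact le_rfl
  | tail _ hst ih => exact ih.trans (weight_le_of_step hst)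

theorem blockWeight_add_weightAux_le (t : Word) (a b : ℕ) :
    blockWeight a + weightAux b t ≤ weightAux (a + b) t := by
  induction t generalizing b with
  | nil => exact blockWeight_add_le a b
  | cons c t ih =>
    cases c
    · simp only [weightAux]; have := blockWeight_add_le a b; omega
    · simpa only [weightAux, Nat.add_assoc] using ih (b + 1)

theorem weight_add_le_weight_append (u v : Word) : weight u + weight v ≤ weight (u ++ v) := by
  suffices h : ∀ n, weightAux n u + weight v ≤ weightAux n (u ++ v) from h 0
  induction u with
  | nil => intro n; simpa [weightAux, weight] using blockWeight_add_weightAux_le v n 0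
  | cons a t ih =>
    intro n
    cases a
    · simp only [weightAux, List.cons_append]; have := ih 0; omega
    · exact ih (n + 1)

theorem length_le_weightAux (w : Word) (n : ℕ) : 2 * n + w.length ≤ weightAux n w := by
  induction w generalizing n with
  | nil => simp only [weightAux, blockWeight, List.length_nil]; omega
  | cons a t ih =>
    cases a
    · simp only [weightAux, List.length_cons]
      have := ih 0
      have : 2 * n ≤ blockWeight n := by unfold blockWeight; omega
      omega
    · simp only [weightAux, List.length_cons]; have := ih (n + 1); omega

theorem length_le_weight (w : Word) : w.length ≤ weight w := by
  simpa [weight] using length_le_weightAux w 0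

noncomputable def weightNorm (m : M) : ℕ := weight (normalForm m)

theorem normalForm_mul (a b : M) : normalForm (a * b) = nf (normalForm a ++ normalForm b) := by
  rw [← normalForm_ofWord, ofWord_append, ofWord_normalForm, ofWord_normalForm]

theorem isAtomicNorm_weightNorm : IsAtomicNorm weightNorm := by
  refine ⟨fun m hm => ?_, fun a b => ?_⟩
  · have hne : normalForm m ≠ [] := fun h => hm (normalForm_eq_nil_iff.1 h)
    exact (List.length_pos_iff.2 hne).trans_le (length_le_weight _)
  · simp only [weightNorm, normalForm_mul]
    exact (weight_add_le_weight_append _ _).trans (weight_le_of_reflTransGen (reflTransGen_nf _))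

def reverseHom : M →* Mᵐᵒᵖ :=
  PresentedMonoid.lift (fun a => MulOpposite.op (PresentedMonoid.of relKappa a)) <| by
    rintro _ _ ⟨rfl, rfl⟩
    simp only [map_mul, FreeMonoid.lift_eval_of, ← MulOpposite.op_mul, mul_assoc]
    congr 1
    have h := PresentedMonoid.mk_eq_mk_of_rel (rels := relKappa) ⟨rfl, rfl⟩
    simp only [map_mul, mul_assoc] at h
    exact h

theorem reverseHom_ofWord (w : Word) :
    reverseHom (ofWord w) = MulOpposite.op (ofWord w.reverse) := by
  induction w with
  | nil => rfl
  | cons a w ih =>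
    rw [ofWord_cons, map_mul, ih, List.reverse_cons, ofWord_append, MulOpposite.op_mul]
    rfl

theorem unop_reverseHom_unop_reverseHom (m : M) :
    (reverseHom (reverseHom m).unop).unop = m := by
  rw [← ofWord_normalForm m, reverseHom_ofWord, MulOpposite.unop_op, reverseHom_ofWord,
    MulOpposite.unop_op, List.reverse_reverse]

/-- Word reversal: the defining relation is made of palindromes. -/
def reverse : M ≃* Mᵐᵒᵖ where
  toFun := reverseHom
  invFun m := (reverseHom m.unop).unop
  left_inv := unop_reverseHom_unop_reverseHom
  right_inv m := MulOpposite.unop_injective (unop_reverseHom_unop_reverseHom m.unop)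
  map_mul' := map_mul reverseHom

instance : IsRightCancelMul M :=
  reverse.injective.isRightCancelMul _ (map_mul reverse)

def delta : M := ofWord [true, true, true]

theorem commute_delta (m : M) : Commute delta m := by
  rw [Commute, SemiconjBy, ← ofWord_normalForm m, delta, ← ofWord_append, ← ofWord_append,
    ofWord_yyy_append]

theorem letter_leftDvd_delta (a : Bool) : LeftDvd (ofWord [a]) delta := by
  cases a
  · refine ⟨ofWord [true, false, true, false, true], ?_⟩
    rw [← ofWord_append]
    exact (ofWord_eq_of_reflTransGen (.single (.rewrite [] [true] Rule.braid))).symm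
  · exact ⟨ofWord [true, true], rfl⟩

theorem ofWord_leftDvd_delta_pow (w : Word) : LeftDvd (ofWord w) (delta ^ w.length) := by
  induction w with
  | nil => exact one_leftDvd _
  | cons a w ih =>
    obtain ⟨c, hc⟩ := letter_leftDvd_delta a
    have hcomm : c * delta ^ w.length = delta ^ w.length * c :=
      ((commute_delta c).pow_left _).eq.symm
    have h : delta ^ (w.length + 1) = ofWord [a] * (delta ^ w.length * c) := by
      rw [← hcomm, ← mul_assoc, ← hc, pow_succ']
    rw [List.length_cons, h, ofWord_cons]
    exact (ih.trans (leftDvd_mul_right _ c)).mul_left _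

theorem exists_common_multiple (a b : M) : ∃ d, LeftDvd a d ∧ LeftDvd b d := by
  refine ⟨delta ^ ((normalForm a).length + (normalForm b).length), ?_, ?_⟩
  · have h := ofWord_leftDvd_delta_pow (normalForm a)
    rw [ofWord_normalForm] at h
    exact h.trans (pow_add delta _ _ ▸ leftDvd_mul_right _ _)
  · have h := ofWord_leftDvd_delta_pow (normalForm b)
    rw [ofWord_normalForm] at h
    exact h.trans (pow_add delta _ _ ▸ ((commute_delta _).pow_pow _ _).eq ▸ leftDvd_mul_right _ _)

theorem isRightLcm_x_y : IsRightLcm (ofWord [false]) (ofWord [true]) (ofWord [true, true]) :=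
  ⟨⟨ofWord [true, false, true, false],
      by rw [← ofWord_append]; exact ofWord_eq_of_rule Rule.braid |>.symm⟩,
    ⟨ofWord [true], rfl⟩, fun _ => yy_leftDvd⟩

theorem exists_isRightLcm (a b : M) : ∃ c, IsRightLcm a b c := by
  have hletters : ∀ s ∈ Set.range (PresentedMonoid.of relKappa),
      ∀ t ∈ Set.range (PresentedMonoid.of relKappa), ∃ m, IsRightLcm s t m := by
    rintro _ ⟨s, rfl⟩ _ ⟨t, rfl⟩
    cases s <;> cases t
    exacts [⟨_, .self _⟩, ⟨_, isRightLcm_x_y⟩, ⟨_, isRightLcm_x_y.symm⟩, ⟨_, .self _⟩]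
  obtain ⟨d, had, hbd⟩ := exists_common_multiple a b
  obtain ⟨c, hc, -⟩ := exists_isRightLcm_of_generators isAtomicNorm_weightNorm
    (PresentedMonoid.closure_range_of relKappa) hletters had hbd
  exact ⟨c, hc⟩

theorem finite_setOf_leftDvd_delta : {d | LeftDvd d delta}.Finite := by
  refine ((List.finite_length_le Bool (weightNorm delta)).preimage
    normalForm_injective.injOn).subset fun d ⟨c, hc⟩ => ?_
  have := isAtomicNorm_weightNorm.2 d c
  rw [← hc] at this
  exact (length_le_weight _).trans (by unfold weightNorm at this ⊢; omega)

theorem isGarsideElement_delta : IsGarsideElement delta := by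
  refine ⟨setOf_leftDvd_eq_setOf_rightDvd' fun m => commute_delta m, finite_setOf_leftDvd_delta,
    top_le_iff.1 ?_⟩
  rw [← PresentedMonoid.closure_range_of relKappa]
  exact Submonoid.closure_mono (Set.range_subset_iff.2 letter_leftDvd_delta)

theorem isGarsideMonoid : IsGarsideMonoid M where
  mul_left_cancel _ _ _ := mul_left_cancel
  mul_right_cancel _ _ _ := mul_right_cancel
  conical _ := isAtomicNorm_weightNorm.eq_one_of_isUnit
  atomic := ⟨weightNorm, isAtomicNorm_weightNorm⟩
  right_lcm := exists_isRightLcm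
  left_lcm := exists_isLeftLcm_of_mulEquiv_mulOpposite reverse exists_isRightLcm
  garside := ⟨delta, isGarsideElement_delta⟩

end Kappa

theorem kappaMonoid_isGarside_and_no_additive_norm :
    IsGarsideMonoid (PresentedMonoid relKappa) ∧
      ¬∃ ν : PresentedMonoid relKappa → ℕ,
        (∀ a : PresentedMonoid relKappa, a ≠ 1 → 0 < ν a) ∧
        ∀ a b : PresentedMonoid relKappa, ν (a * b) = ν a + ν b := by
  refine ⟨Kappa.isGarsideMonoid, fun ⟨ν, hpos, hadd⟩ => ?_⟩
  have hrel := congrArg ν (Kappa.ofWord_eq_of_rule Kappa.Rule.braid)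
  simp only [Kappa.ofWord_cons _ (_ :: _), hadd] at hrel
  have hx := hpos _ (Kappa.ofWord_ne_one (w := [false]) ⟨by decide, by decide⟩ (by simp))
  omega
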